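/- The p·q elements e(j,c), for 0 ≤ j ≤ q−1 and 0 ≤ c ≤ p−1, form an F-basis of H, and they are eigenvectors for the adjoint action of e(1,0) = m(0,1) + σ^(p−1)·m(p−1,1): for all such j and all integers c, [e(1,0), e(j,c)] = α(j,c)·e(j,c). -/
import Mathlib


open scoped BigOperators

/-- Binomial coefficient of integers, zero unless `0 ≤ b ≤ a`. -/
def intChoose (a b : ℤ) : ℤ :=
  if 0 ≤ b ∧ b ≤ a then (a.toNat.choose b.toNat : ℤ) else 0

/-- The structure constant `N(i,j,k,l)`. -/
def Ncoef (i j k l : ℤ) : ℤ :=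
  intChoose (i + k - 1) i * intChoose (j + l - 1) (j - 1) -
    intChoose (i + k - 1) (i - 1) * intChoose (j + l - 1) j

variable (F : Type*) [Field F]

/-- The underlying space of `H(2;(n1,n2);Φ(1))`, with basis indexed by `Fin r × Fin q`. -/
abbrev Hsp (r q : ℕ) : Type _ := Fin r × Fin q → F

/-- The divided power monomial `x^(i) y^(j)`, read as `0` when out of range. -/
noncomputable def mm (r q : ℕ) (i j : ℤ) : Hsp F r q :=
  if h : 0 ≤ i ∧ i < (r : ℤ) ∧ 0 ≤ j ∧ j < (q : ℤ) then
    Pi.single (⟨i.toNat, by omega⟩, ⟨j.toNat, by omega⟩) 1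
  else 0

/-- The bracket on basis elements of `H(2;(n1,n2);Φ(1))`. -/
noncomputable def bB (r q : ℕ) (a b : Fin r × Fin q) : Hsp F r q :=
  if 0 < (a.1 : ℤ) + (b.1 : ℤ) then
    ((Ncoef (a.1 : ℤ) (a.2 : ℤ) (b.1 : ℤ) (b.2 : ℤ) : ℤ) : F) •
      mm F r q ((a.1 : ℤ) + (b.1 : ℤ) - 1) ((a.2 : ℤ) + (b.2 : ℤ) - 1)
  else
    ((intChoose ((a.2 : ℤ) + (b.2 : ℤ) - 1) (b.2 : ℤ) -
        intChoose ((a.2 : ℤ) + (b.2 : ℤ) - 1) (a.2 : ℤ) : ℤ) : F) •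
      mm F r q ((r : ℤ) - 1) ((a.2 : ℤ) + (b.2 : ℤ) - 1)

/-- The bilinear bracket of `H(2;(n1,n2);Φ(1))`, extending `bB` bilinearly. -/
noncomputable def br (r q : ℕ) (u v : Hsp F r q) : Hsp F r q :=
  ∑ a : Fin r × Fin q, ∑ b : Fin r × Fin q, (u a * v b) • bB F r q a b

/-- The eigenvalue `α(j,c) = (1-j)ρ + cσ`. -/
noncomputable def alphaF (σ ρ : F) (j c : ℤ) : F := (1 - (j : F)) * ρ + (c : F) * σ

/-- The eigenvector `e(j,c)` (case `n1 = 1`, so `r = p`). -/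
noncomputable def ee (p q : ℕ) (σ ρ : F) (j c : ℤ) : Hsp F p q :=
  ((j : F) * σ ^ (p - 1)) • mm F p q ((p : ℤ) - 1) j +
    ∑ i ∈ Finset.range p, alphaF F σ ρ j c ^ i • mm F p q (i : ℤ) j
section Helpers

/-! ### intChoose lemmas -/

lemma intChoose_self {a : ℤ} (h : 0 ≤ a) : intChoose a a = 1 := by
  rw [intChoose, if_pos ⟨h, le_refl a⟩, Nat.choose_self]; rfl

lemma intChoose_zero_right {a : ℤ} (h : 0 ≤ a) : intChoose a 0 = 1 := by
  rw [intChoose, if_pos ⟨le_refl 0, h⟩]; simp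

lemma intChoose_neg_right {a b : ℤ} (h : b < 0) : intChoose a b = 0 := by
  rw [intChoose, if_neg]; omega

lemma intChoose_lt {a b : ℤ} (h : a < b) : intChoose a b = 0 := by
  rw [intChoose, if_neg]; omega

lemma intChoose_one_right {a : ℤ} (h : 0 ≤ a) : intChoose a 1 = a := by
  rcases eq_or_lt_of_le h with h' | h'
  · rw [intChoose, if_neg (by omega)]; omega
  · rw [intChoose, if_pos ⟨by norm_num, by omega⟩]
    show ((a.toNat.choose (1:ℤ).toNat : ℕ) : ℤ) = a
    rw [show (1:ℤ).toNat = 1 from rfl, Nat.choose_one_right]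
    exact Int.toNat_of_nonneg h

lemma intChoose_pred {a : ℤ} (h : 1 ≤ a) : intChoose a (a - 1) = a := by
  rw [intChoose, if_pos ⟨by omega, by omega⟩]
  have h1 : (a - 1).toNat = a.toNat - 1 := by omega
  have h2 : 1 ≤ a.toNat := by omega
  rw [h1, Nat.choose_symm (by omega), Nat.choose_one_right]
  omega

end Helpers
section Helpers2

variable {F : Type*} [Field F]

lemma mm_eq_single (p q : ℕ) {i j : ℤ} (h1 : 0 ≤ i) (h2 : i < (p:ℤ)) (h3 : 0 ≤ j)
    (h4 : j < (q:ℤ)) :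
    mm F p q i j = Pi.single (⟨i.toNat, by omega⟩, ⟨j.toNat, by omega⟩) 1 := by
  rw [mm, dif_pos ⟨h1, h2, h3, h4⟩]

lemma mm_out (p q : ℕ) {i j : ℤ} (h : ¬ (0 ≤ i ∧ i < (p:ℤ) ∧ 0 ≤ j ∧ j < (q:ℤ))) :
    mm F p q i j = 0 := by
  rw [mm, dif_neg h]

lemma br_eq (p q : ℕ) (u v : Hsp F p q) :
    br F p q u v = ∑ a : Fin p × Fin q, u a • ∑ b : Fin p × Fin q, v b • bB F p q a b := by
  rw [br]
  refine Finset.sum_congr rfl fun a _ => ?_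
  rw [Finset.smul_sum]
  exact Finset.sum_congr rfl fun b _ => by rw [mul_smul]

lemma sum_single_mul_smul {ι M : Type*} [Fintype ι] [DecidableEq ι] [AddCommMonoid M]
    [Module F M] (a0 : ι) (c : F) (h : ι → M) :
    ∑ a : ι, (c * (Pi.single a0 (1:F) : ι → F) a) • h a = c • h a0 := by
  rw [Finset.sum_eq_single a0]
  · rw [Pi.single_eq_same, mul_one]
  · intro b _ hb
    rw [Pi.single_eq_of_ne hb, mul_zero, zero_smul]
  · intro habs; exact absurd (Finset.mem_univ a0) habs

lemma sum_single_smul {ι M : Type*} [Fintype ι] [DecidableEq ι] [AddCommMonoid M]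
    [Module F M] (a0 : ι) (c : F) (h : ι → M) :
    ∑ a : ι, ((Pi.single a0 c : ι → F) a) • h a = c • h a0 := by
  have : ∀ a : ι, (Pi.single a0 c : ι → F) a = c * (Pi.single a0 (1:F) : ι → F) a := by
    intro a
    rcases eq_or_ne a a0 with rfl | hne
    · simp
    · rw [Pi.single_eq_of_ne hne, Pi.single_eq_of_ne hne, mul_zero]
  simp_rw [this]
  exact sum_single_mul_smul a0 c h

lemma sum_decomp_smul {ι ι' M : Type*} [Fintype ι] [DecidableEq ι] [Fintype ι']
    [AddCommMonoid M] [Module F M] (κ : ι' → ι) (coef : ι' → F) (h : ι → M) :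
    ∑ b : ι, ((∑ i : ι', coef i • (Pi.single (κ i) (1:F) : ι → F)) b) • h b
      = ∑ i : ι', coef i • h (κ i) := by
  simp only [Finset.sum_apply, Pi.smul_apply, smul_eq_mul]
  simp_rw [Finset.sum_smul]
  rw [Finset.sum_comm]
  exact Finset.sum_congr rfl fun i _ => sum_single_mul_smul (κ i) (coef i) h

lemma sum_range_cut {M : Type*} [AddCommMonoid M] {n : ℕ} (hn : 0 < n) (g : ℕ → M) :
    ∑ i ∈ Finset.range n, g i = (∑ i ∈ Finset.range (n-1), g (i+1)) + g 0 := by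
  obtain ⟨m, rfl⟩ : ∃ m, n = m + 1 := ⟨n - 1, by omega⟩
  simp [Finset.sum_range_succ']

lemma sum_range_cut' {M : Type*} [AddCommMonoid M] {n : ℕ} (hn : 0 < n) (g : ℕ → M) :
    ∑ i ∈ Finset.range n, g i = (∑ i ∈ Finset.range (n-1), g i) + g (n-1) := by
  obtain ⟨m, rfl⟩ : ∃ m, n = m + 1 := ⟨n - 1, by omega⟩
  simp [Finset.sum_range_succ]

end Helpers2
section CharHelpers

variable {F : Type*} [Field F] {p : ℕ}

lemma int_pow_card (hp : p.Prime) [CharP F p] (n : ℤ) : ((n : F)) ^ p = (n : F) := by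
  haveI := Fact.mk hp
  let φ : ZMod p →+* F := ZMod.castHom dvd_rfl F
  calc ((n:F))^p = (φ (n : ZMod p))^p := by rw [map_intCast]
    _ = φ ((n : ZMod p)^p) := (map_pow φ _ p).symm
    _ = φ (n : ZMod p) := by rw [ZMod.pow_card]
    _ = (n : F) := map_intCast φ n

lemma key_scalar (hp : p.Prime) [CharP F p] (σ ρ : F)
    (hρ : ρ^p - σ^(p-1)*ρ - 1 = 0) (j c : ℤ) :
    (alphaF F σ ρ j c)^p = (1 - (j:F)) + σ^(p-1) * alphaF F σ ρ j c := by
  haveI := Fact.mk hp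
  have hρ' : ρ^p = σ^(p-1)*ρ + 1 := by linear_combination hρ
  have hside : σ^p = σ^(p-1)*σ := by rw [← pow_succ, Nat.sub_add_cancel hp.one_le]
  have h1 : (1 - (j:F)) * ρ = ((1 - j : ℤ) : F) * ρ := by push_cast; ring
  rw [alphaF, h1, add_pow_char, mul_pow, mul_pow, int_pow_card hp, int_pow_card hp,
    hρ', hside]
  push_cast
  ring

end CharHelpers
section MidHelpers

variable {F : Type*} [Field F]

lemma mm_nat (p q : ℕ) {i : ℕ} (h2 : i < p) {j : ℤ} (h3 : 0 ≤ j) (h4 : j < (q:ℤ)) :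
    mm F p q (i:ℤ) j
      = Pi.single ((⟨i, h2⟩ : Fin p), (⟨j.toNat, by omega⟩ : Fin q)) 1 := by
  rw [mm_eq_single p q (by positivity) (by exact_mod_cast h2) h3 h4]
  congr 1

lemma ee_one_zero (p q : ℕ) (hp3 : 3 ≤ p) (σ ρ : F) :
    ee F p q σ ρ 1 0 = mm F p q 0 1 + σ^(p-1) • mm F p q ((p:ℤ)-1) 1 := by
  rw [ee]
  have hα : alphaF F σ ρ 1 0 = 0 := by rw [alphaF]; push_cast; ring
  rw [hα, sum_range_cut (by omega : 0 < p)]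
  have h0 : ∀ i ∈ Finset.range (p-1),
      (0:F)^(i+1) • mm F p q ((i+1 : ℕ):ℤ) 1 = 0 := fun i _ => by
    rw [pow_succ, mul_zero, zero_smul]
  rw [Finset.sum_congr rfl h0, Finset.sum_const_zero, zero_add, pow_zero, one_smul]
  simp only [Int.cast_one, one_mul]
  exact add_comm _ _

lemma ee_decomp (p q : ℕ) (hp1 : 0 < p) {j : ℤ} (hj0 : 0 ≤ j) (hjq : j < (q:ℤ))
    (σ ρ : F) (c : ℤ) :
    ee F p q σ ρ j c = ∑ i ∈ Finset.range p,
      (alphaF F σ ρ j c ^ i + if i = p - 1 then (j:F) * σ^(p-1) else 0) •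
        (Pi.single ((⟨i % p, Nat.mod_lt _ hp1⟩ : Fin p),
            (⟨j.toNat, by omega⟩ : Fin q)) (1:F) : Hsp F p q) := by
  have hsingle : ∀ i ∈ Finset.range p,
      (Pi.single ((⟨i % p, Nat.mod_lt _ hp1⟩ : Fin p),
          (⟨j.toNat, by omega⟩ : Fin q)) (1:F) : Hsp F p q) = mm F p q (i:ℤ) j := by
    intro i hi
    rw [Finset.mem_range] at hi
    have hfin : (⟨i % p, Nat.mod_lt _ hp1⟩ : Fin p) = ⟨i, hi⟩ :=
      Fin.ext (Nat.mod_eq_of_lt hi)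
    rw [hfin, mm_nat p q hi hj0 hjq]
  rw [Finset.sum_congr rfl fun i hi => by rw [hsingle i hi]]
  simp_rw [add_smul, Finset.sum_add_distrib, ite_smul, zero_smul]
  rw [Finset.sum_ite_eq' (Finset.range p) (p-1)
      (fun i => ((j:F) * σ^(p-1)) • mm F p q (i:ℤ) j)]
  rw [if_pos (Finset.mem_range.2 (by omega)), ee]
  have : ((p - 1 : ℕ) : ℤ) = (p:ℤ) - 1 := by omega
  rw [this, add_comm]

end MidHelpers
section BB
variable {F : Type*} [Field F]

lemma bBA_zero (p q : ℕ) (hp3 : 3 ≤ p) (h1q : 1 < q) {j : ℤ} (hj0 : 0 ≤ j) (hjq : j < (q:ℤ)) :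
    bB F p q (⟨0, by omega⟩, ⟨1, h1q⟩) (⟨0, by omega⟩, ⟨j.toNat, by omega⟩)
      = (1 - (j:F)) • mm F p q ((p:ℤ)-1) j := by
  simp only [bB, Ncoef, Nat.cast_zero, Nat.cast_one]
  rw [if_neg (by norm_num)]
  have h2 : (1:ℤ) + (j.toNat : ℤ) - 1 = j := by omega
  have h3 : (j.toNat : ℤ) = j := Int.toNat_of_nonneg hj0
  rw [h2, h3, intChoose_self hj0, intChoose_one_right hj0]
  push_cast
  ring_nf

lemma bBA_pos (p q : ℕ) (hp3 : 3 ≤ p) (h1q : 1 < q) {i : ℕ} (hi : i < p) (hi1 : 1 ≤ i)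
    {j : ℤ} (hj0 : 0 ≤ j) (hjq : j < (q:ℤ)) :
    bB F p q (⟨0, by omega⟩, ⟨1, h1q⟩) (⟨i, hi⟩, ⟨j.toNat, by omega⟩)
      = mm F p q ((i:ℤ)-1) j := by
  simp only [bB, Ncoef, Nat.cast_zero, Nat.cast_one]
  rw [if_pos (by omega)]
  have h2 : (1:ℤ) + (j.toNat : ℤ) - 1 = j := by omega
  have h4 : (0:ℤ) + (i:ℤ) - 1 = (i:ℤ) - 1 := by omega
  have h5 : ((1:ℤ) - 1) = 0 := by norm_num
  have h6 : ((0:ℤ) - 1) = -1 := by norm_num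
  rw [h2, h4, h5, h6, intChoose_zero_right (by omega), intChoose_zero_right hj0,
    intChoose_neg_right (by norm_num), intChoose_one_right hj0]
  push_cast
  norm_num

lemma bBB_zero (p q : ℕ) (hp3 : 3 ≤ p) (h1q : 1 < q) {j : ℤ} (hj0 : 0 ≤ j) (hjq : j < (q:ℤ)) :
    bB F p q (⟨p-1, by omega⟩, ⟨1, h1q⟩) (⟨0, by omega⟩, ⟨j.toNat, by omega⟩)
      = (-(j:F)) • mm F p q ((p:ℤ)-2) j := by
  simp only [bB, Ncoef, Nat.cast_zero, Nat.cast_one]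
  have hP : ((p-1:ℕ):ℤ) = (p:ℤ)-1 := by omega
  rw [hP, if_pos (by omega)]
  have h2 : (1:ℤ) + (j.toNat : ℤ) - 1 = j := by omega
  have hA : (p:ℤ) - 1 + 0 - 1 = (p:ℤ) - 2 := by ring
  have hB : (p:ℤ) - 1 - 1 = (p:ℤ) - 2 := by ring
  have h5 : ((1:ℤ) - 1) = 0 := by norm_num
  rw [h2, hA, hB, h5, intChoose_lt (by omega), intChoose_self (by omega),
    intChoose_zero_right hj0, intChoose_one_right hj0]
  push_cast
  ring_nf

lemma bBB_one (p q : ℕ) (hp : p.Prime) (hp3 : 3 ≤ p) [CharP F p] (h1q : 1 < q)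
    {j : ℤ} (hj0 : 0 ≤ j) (hjq : j < (q:ℤ)) :
    bB F p q (⟨p-1, by omega⟩, ⟨1, h1q⟩) (⟨1, by omega⟩, ⟨j.toNat, by omega⟩)
      = ((1 + (j:F))) • mm F p q ((p:ℤ)-1) j := by
  simp only [bB, Ncoef, Nat.cast_zero, Nat.cast_one]
  have hP : ((p-1:ℕ):ℤ) = (p:ℤ)-1 := by omega
  rw [hP, if_pos (by omega)]
  have h2 : (1:ℤ) + (j.toNat : ℤ) - 1 = j := by omega
  have hA : (p:ℤ) - 1 + 1 - 1 = (p:ℤ) - 1 := by ring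
  have hB : (p:ℤ) - 1 - 1 = ((p:ℤ) - 1) - 1 := by ring
  have h5 : ((1:ℤ) - 1) = 0 := by norm_num
  rw [h2, hA, h5, intChoose_self (by omega), intChoose_pred (by omega),
    intChoose_zero_right hj0, intChoose_one_right hj0]
  have hpF : ((p:ℕ):F) = 0 := CharP.cast_eq_zero F p
  push_cast
  rw [hpF]
  ring_nf

lemma bBB_big (p q : ℕ) (hp3 : 3 ≤ p) (h1q : 1 < q) {i : ℕ} (hi : i < p) (hi2 : 2 ≤ i)
    {j : ℤ} (hj0 : 0 ≤ j) (hjq : j < (q:ℤ)) :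
    bB F p q (⟨p-1, by omega⟩, ⟨1, h1q⟩) (⟨i, hi⟩, ⟨j.toNat, by omega⟩) = 0 := by
  simp only [bB, Ncoef, Nat.cast_zero, Nat.cast_one]
  have hP : ((p-1:ℕ):ℤ) = (p:ℤ)-1 := by omega
  rw [hP, if_pos (by omega)]
  rw [mm_out p q (by omega), smul_zero]

end BB
section Big
variable {F : Type*} [Field F]

lemma sum_decomp_smul' {ι ι' M : Type*} [Fintype ι] [DecidableEq ι]
    [AddCommMonoid M] [Module F M] (s : Finset ι') (κ : ι' → ι) (coef : ι' → F) (h : ι → M) :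
    ∑ b : ι, ((∑ i ∈ s, coef i • (Pi.single (κ i) (1:F) : ι → F)) b) • h b
      = ∑ i ∈ s, coef i • h (κ i) := by
  simp only [Finset.sum_apply, Pi.smul_apply, smul_eq_mul]
  simp_rw [Finset.sum_smul]
  rw [Finset.sum_comm]
  exact Finset.sum_congr rfl fun i _ => sum_single_mul_smul (κ i) (coef i) h

end Big

/-- auxiliary: the exceptional part of the bracket `[e(1,0), m(i,j)]`. -/
noncomputable def Dfun (F : Type*) [Field F] (p q : ℕ) (σ : F) (j : ℤ) : ℕ → Hsp F p q :=
  fun i =>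
    if i = 0 then
      (1 - (j:F)) • mm F p q ((p:ℤ)-1) j + (-((j:F) * σ^(p-1))) • mm F p q ((p:ℤ)-2) j
    else if i = 1 then ((1 + (j:F)) * σ^(p-1)) • mm F p q ((p:ℤ)-1) j
    else 0

/-- auxiliary: coefficients of `e(j,c)` in the monomial basis. -/
noncomputable def coefNf (F : Type*) [Field F] (p : ℕ) (σ ρ : F) (j c : ℤ) : ℕ → F :=
  fun i => alphaF F σ ρ j c ^ i + if i = p - 1 then (j:F) * σ^(p-1) else 0

section Big2
variable {F : Type*} [Field F]

lemma br_ee (p q : ℕ) (hp : p.Prime) (hp3 : 3 ≤ p) [CharP F p] (h1q : 1 < q) (σ ρ : F)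
    (hρ : ρ ^ p - σ ^ (p - 1) * ρ - 1 = 0) {j : ℤ} (hj0 : 0 ≤ j) (hjq : j < (q:ℤ)) (c : ℤ) :
    br F p q (ee F p q σ ρ 1 0) (ee F p q σ ρ j c)
      = alphaF F σ ρ j c • ee F p q σ ρ j c := by
  have hp1 : 0 < p := by omega
  have hjt : j.toNat < q := by omega
  set α := alphaF F σ ρ j c with hα
  set A : Fin p × Fin q := (⟨0, by omega⟩, ⟨1, h1q⟩) with hAdef
  set B : Fin p × Fin q := (⟨p-1, by omega⟩, ⟨1, h1q⟩) with hBdef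
  set κ : ℕ → Fin p × Fin q := fun i => (⟨i % p, Nat.mod_lt _ hp1⟩, ⟨j.toNat, hjt⟩) with hκdef
  -- decomposition of e(1,0)
  have hu : ee F p q σ ρ 1 0
      = (Pi.single A 1 : Hsp F p q) + σ^(p-1) • (Pi.single B 1 : Hsp F p q) := by
    rw [ee_one_zero p q hp3]
    congr 1
    · rw [show (0:ℤ) = ((0:ℕ):ℤ) by norm_num,
        mm_nat p q hp1 (by norm_num) (by exact_mod_cast h1q)]
      congr 1
    · congr 1
      rw [show ((p:ℤ)-1) = ((p-1:ℕ):ℤ) by omega,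
        mm_nat p q (by omega) (by norm_num) (by exact_mod_cast h1q)]
      congr 1
  -- decomposition of e(j,c)
  have hv : ee F p q σ ρ j c
      = ∑ i ∈ Finset.range p, coefNf F p σ ρ j c i • (Pi.single (κ i) (1:F) : Hsp F p q) := by
    rw [hκdef]
    exact ee_decomp p q hp1 hj0 hjq σ ρ c
  have step1 : br F p q (ee F p q σ ρ 1 0) (ee F p q σ ρ j c)
      = (∑ b : Fin p × Fin q, ee F p q σ ρ j c b • bB F p q A b)
        + σ^(p-1) • (∑ b : Fin p × Fin q, ee F p q σ ρ j c b • bB F p q B b) := by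
    rw [br_eq, hu]
    simp only [Pi.add_apply, Pi.smul_apply, smul_eq_mul, add_smul, Finset.sum_add_distrib]
    rw [sum_single_smul, sum_single_mul_smul, one_smul]
  have step2A : (∑ b : Fin p × Fin q, ee F p q σ ρ j c b • bB F p q A b)
      = ∑ i ∈ Finset.range p, coefNf F p σ ρ j c i • bB F p q A (κ i) := by
    conv_lhs => simp only [hv]
    exact sum_decomp_smul' _ _ _ _
  have step2B : (∑ b : Fin p × Fin q, ee F p q σ ρ j c b • bB F p q B b)
      = ∑ i ∈ Finset.range p, coefNf F p σ ρ j c i • bB F p q B (κ i) := by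
    conv_lhs => simp only [hv]
    exact sum_decomp_smul' _ _ _ _
  have step3 : br F p q (ee F p q σ ρ 1 0) (ee F p q σ ρ j c)
      = ∑ i ∈ Finset.range p,
          coefNf F p σ ρ j c i • (bB F p q A (κ i) + σ^(p-1) • bB F p q B (κ i)) := by
    rw [step1, step2A, step2B, Finset.smul_sum, ← Finset.sum_add_distrib]
    refine Finset.sum_congr rfl fun i _ => ?_
    rw [smul_add, smul_comm (σ^(p-1)) (coefNf F p σ ρ j c i)]
  have hG : ∀ i ∈ Finset.range p,
      bB F p q A (κ i) + σ^(p-1) • bB F p q B (κ i)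
        = mm F p q ((i:ℤ)-1) j + Dfun F p q σ j i := by
    intro i hi
    rw [Finset.mem_range] at hi
    have hκi : κ i = ((⟨i, hi⟩ : Fin p), (⟨j.toNat, hjt⟩ : Fin q)) := by
      rw [hκdef]
      exact Prod.ext (Fin.ext (Nat.mod_eq_of_lt hi)) rfl
    rw [hκi, hAdef, hBdef]
    rcases Nat.lt_or_ge i 1 with h0 | h1
    · have hieq : i = 0 := by omega
      subst hieq
      rw [bBA_zero p q hp3 h1q hj0 hjq, bBB_zero p q hp3 h1q hj0 hjq]
      rw [show mm F p q (((0:ℕ):ℤ)-1) j = 0 from mm_out p q (by omega), zero_add]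
      simp [Dfun]
      module
    · rcases Nat.lt_or_ge i 2 with h1' | h2
      · have hieq : i = 1 := by omega
        subst hieq
        rw [bBA_pos p q hp3 h1q hi (le_refl 1) hj0 hjq, bBB_one p q hp hp3 h1q hj0 hjq]
        simp [Dfun]
        module
      · rw [bBA_pos p q hp3 h1q hi (by omega) hj0 hjq, bBB_big p q hp3 h1q hi h2 hj0 hjq]
        have hne0 : ¬ i = 0 := by omega
        have hne1 : ¬ i = 1 := by omega
        simp [Dfun, hne0, hne1]
  rw [step3, Finset.sum_congr rfl (fun i hi => by rw [hG i hi])]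
  simp_rw [smul_add]
  rw [Finset.sum_add_distrib]
  have hS2 : ∑ i ∈ Finset.range p, coefNf F p σ ρ j c i • Dfun F p q σ j i
      = Dfun F p q σ j 0 + α • Dfun F p q σ j 1 := by
    rw [← Finset.sum_subset (Finset.range_subset_range.2 (by omega : 2 ≤ p))
      (fun x _ hx => ?_)]
    · rw [Finset.sum_range_succ, Finset.sum_range_one]
      have hc0 : coefNf F p σ ρ j c 0 = 1 := by
        rw [coefNf]
        rw [if_neg (by omega : ¬ (0:ℕ) = p - 1), pow_zero, add_zero]
      have hc1 : coefNf F p σ ρ j c 1 = α := by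
        rw [coefNf]
        rw [if_neg (by omega : ¬ (1:ℕ) = p - 1), pow_one, add_zero, hα]
      rw [hc0, hc1, one_smul]
    · rw [Finset.mem_range, Nat.not_lt] at hx
      have hne0 : ¬ x = 0 := by omega
      have hne1 : ¬ x = 1 := by omega
      simp [Dfun, hne0, hne1]
  have hS1 : ∑ i ∈ Finset.range p, coefNf F p σ ρ j c i • mm F p q ((i:ℤ)-1) j
      = (∑ i ∈ Finset.range (p-1), α^(i+1) • mm F p q (i:ℤ) j)
        + ((j:F) * σ^(p-1)) • mm F p q ((p:ℤ)-2) j := by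
    simp only [coefNf, add_smul, ite_smul, zero_smul]
    rw [Finset.sum_add_distrib]
    congr 1
    · rw [sum_range_cut (by omega : 0 < p)]
      rw [show mm F p q (((0:ℕ):ℤ)-1) j = 0 from mm_out p q (by omega),
        smul_zero, add_zero]
      refine Finset.sum_congr rfl fun i _ => ?_
      rw [show ((i+1:ℕ):ℤ) - 1 = (i:ℤ) by push_cast; ring]
    · rw [Finset.sum_ite_eq' (Finset.range p) (p-1)
        (fun i => ((j:F) * σ^(p-1)) • mm F p q ((i:ℤ)-1) j),
        if_pos (Finset.mem_range.2 (by omega))]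
      rw [show ((p-1:ℕ):ℤ) - 1 = (p:ℤ) - 2 by omega]
  have hRHS : α • ee F p q σ ρ j c
      = ((∑ i ∈ Finset.range (p-1), α^(i+1) • mm F p q (i:ℤ) j)
        + (α * ((j:F) * σ^(p-1))) • mm F p q ((p:ℤ)-1) j) + α^p • mm F p q ((p:ℤ)-1) j := by
    rw [ee, ← hα, smul_add, Finset.smul_sum, smul_smul]
    rw [Finset.sum_congr rfl (fun i _ => by
      rw [smul_smul, ← pow_succ'] :
        ∀ i ∈ Finset.range p, α • (α^i • mm F p q (i:ℤ) j) = α^(i+1) • mm F p q (i:ℤ) j)]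
    rw [sum_range_cut' (by omega : 0 < p),
      show (p-1)+1 = p by omega, show ((p-1:ℕ):ℤ) = (p:ℤ)-1 by omega]
    abel
  rw [hS1, hS2, hRHS]
  norm_num [Dfun]
  rw [hα, key_scalar hp σ ρ hρ j c, ← hα]
  module

end Big2
section Span
variable {F : Type*} [Field F]

lemma span_ee (p q : ℕ) (hp : p.Prime) (hp3 : 3 ≤ p) [CharP F p] (h1q : 1 < q)
    (σ ρ : F) (hσ : σ ≠ 0) :
    Submodule.span F
      (Set.range fun jc : Fin q × Fin p => ee F p q σ ρ (jc.1 : ℤ) (jc.2 : ℤ))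
      = (⊤ : Submodule F (Hsp F p q)) := by
  have hp1 : 0 < p := by omega
  set S := Submodule.span F
      (Set.range fun jc : Fin q × Fin p => ee F p q σ ρ (jc.1 : ℤ) (jc.2 : ℤ)) with hS
  suffices hsingle : ∀ x : Fin p × Fin q, (Pi.single x (1:F) : Hsp F p q) ∈ S by
    rw [eq_top_iff, ← (Pi.basisFun F (Fin p × Fin q)).span_eq]
    refine Submodule.span_le.2 ?_
    rintro _ ⟨i, rfl⟩
    rw [Pi.basisFun_apply]
    exact hsingle i
  rintro ⟨xi, xj⟩
  set j : ℤ := ((xj : ℕ) : ℤ) with hj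
  have hj0 : 0 ≤ j := Int.natCast_nonneg _
  have hjq : j < (q:ℤ) := by rw [hj]; exact_mod_cast xj.isLt
  set v : Fin p → F := fun c => alphaF F σ ρ j ((c:ℕ):ℤ) with hv
  have hinj : Function.Injective v := by
    intro c1 c2 h
    simp only [hv, alphaF] at h
    have h2 : ((c1:ℕ):F) * σ = ((c2:ℕ):F) * σ := by
      have := add_left_cancel h
      exact_mod_cast this
    have h3 : ((c1:ℕ):F) = ((c2:ℕ):F) := mul_right_cancel₀ hσ h2
    exact Fin.ext (CharP.natCast_injOn_Iio F p (Set.mem_Iio.2 c1.isLt)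
      (Set.mem_Iio.2 c2.isLt) h3)
  set M : Matrix (Fin p) (Fin p) F := Matrix.vandermonde v with hM
  have hdet : IsUnit M.det :=
    (Matrix.det_vandermonde_ne_zero_iff.mpr hinj).isUnit
  have hTM : M⁻¹ * M = 1 := Matrix.nonsing_inv_mul M hdet
  have hcoeff : ∀ i i0 : Fin p,
      (∑ c : Fin p, M⁻¹ i0 c * v c ^ (i:ℕ)) = (1 : Matrix (Fin p) (Fin p) F) i0 i := by
    intro i i0
    rw [← hTM, Matrix.mul_apply]
    refine Finset.sum_congr rfl fun c _ => ?_
    rw [hM, Matrix.vandermonde_apply]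
  have hee : ∀ cc : Fin p, ee F p q σ ρ j ((cc:ℕ):ℤ)
      = ((j:F) * σ^(p-1)) • mm F p q ((p:ℤ)-1) j
        + ∑ i : Fin p, (v cc)^(i:ℕ) • mm F p q ((i:ℕ):ℤ) j := by
    intro cc
    rw [ee, ← Fin.sum_univ_eq_sum_range
      (fun i => alphaF F σ ρ j ((cc:ℕ):ℤ) ^ i • mm F p q (i:ℤ) j) p]
  have key : ∀ i0 : Fin p, (∑ c : Fin p, M⁻¹ i0 c • ee F p q σ ρ j ((c:ℕ):ℤ))
      = (if i0 = (⟨0, hp1⟩ : Fin p) then (1:F) else 0) •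
          (((j:F) * σ^(p-1)) • mm F p q ((p:ℤ)-1) j)
        + mm F p q ((i0:ℕ):ℤ) j := by
    intro i0
    have e1 : (∑ c : Fin p, M⁻¹ i0 c • ee F p q σ ρ j ((c:ℕ):ℤ))
        = (∑ c : Fin p, M⁻¹ i0 c) • (((j:F) * σ^(p-1)) • mm F p q ((p:ℤ)-1) j)
          + ∑ i : Fin p, (∑ c : Fin p, M⁻¹ i0 c * v c ^ (i:ℕ)) • mm F p q ((i:ℕ):ℤ) j := by
      rw [Finset.sum_congr rfl fun cc _ => by rw [hee cc, smul_add]]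
      rw [Finset.sum_add_distrib, Finset.sum_smul]
      congr 1
      simp_rw [Finset.smul_sum]
      rw [Finset.sum_comm]
      refine Finset.sum_congr rfl fun i _ => ?_
      rw [Finset.sum_smul]
      exact Finset.sum_congr rfl fun cc _ => by rw [smul_smul]
    rw [e1]
    have e2 : (∑ c : Fin p, M⁻¹ i0 c) = (if i0 = (⟨0, hp1⟩ : Fin p) then (1:F) else 0) := by
      rw [← Matrix.one_apply (i := i0) (j := (⟨0, hp1⟩ : Fin p)), ← hcoeff ⟨0, hp1⟩ i0]
      refine Finset.sum_congr rfl fun c _ => ?_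
      norm_num
    have e3 : ∑ i : Fin p, (∑ c : Fin p, M⁻¹ i0 c * v c ^ (i:ℕ)) • mm F p q ((i:ℕ):ℤ) j
        = mm F p q ((i0:ℕ):ℤ) j := by
      rw [Finset.sum_congr rfl fun i _ => by rw [hcoeff i i0]]
      simp only [Matrix.one_apply, ite_smul, one_smul, zero_smul]
      rw [Finset.sum_ite_eq Finset.univ i0 (fun i => mm F p q ((i:ℕ):ℤ) j),
        if_pos (Finset.mem_univ i0)]
    rw [e2, e3]
  have hEmem : ∀ i0 : Fin p,
      (if i0 = (⟨0, hp1⟩ : Fin p) then (1:F) else 0) •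
          (((j:F) * σ^(p-1)) • mm F p q ((p:ℤ)-1) j)
        + mm F p q ((i0:ℕ):ℤ) j ∈ S := by
    intro i0
    rw [← key i0]
    exact Submodule.sum_mem _ fun c _ =>
      Submodule.smul_mem _ _ (Submodule.subset_span ⟨(xj, c), rfl⟩)
  have hm_top : mm F p q ((p:ℤ)-1) j ∈ S := by
    have h := hEmem ⟨p-1, by omega⟩
    rw [if_neg (by simp [Fin.ext_iff]; omega), zero_smul, zero_add] at h
    have h' : (((⟨p-1, by omega⟩ : Fin p) : ℕ) : ℤ) = (p:ℤ)-1 := by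
      simp; omega
    rwa [h'] at h
  have hsingle' : mm F p q ((xi:ℕ):ℤ) j ∈ S := by
    rcases eq_or_ne xi ⟨0, hp1⟩ with rfl | hne
    · have h := hEmem ⟨0, hp1⟩
      rw [if_pos rfl, one_smul] at h
      have h2 := Submodule.sub_mem S h
        (Submodule.smul_mem S ((j:F)*σ^(p-1)) hm_top)
      rwa [add_sub_cancel_left] at h2
    · have h := hEmem xi
      rwa [if_neg hne, zero_smul, zero_add] at h
  have hmm : mm F p q ((xi:ℕ):ℤ) j = Pi.single ((xi, xj) : Fin p × Fin q) 1 := by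
    rw [mm_nat p q xi.isLt hj0 hjq]
    congr 1
  rwa [hmm] at hsingle'

end Span
theorem stmt5 (p : ℕ) (hp : p.Prime) (hodd : p ≠ 2) (F : Type*) [Field F] [CharP F p]
    (n2 : ℕ) (hn2 : 0 < n2) (σ ρ : F) (hσ : σ ≠ 0)
    (hρ : ρ ^ p - σ ^ (p - 1) * ρ - 1 = 0) :
    -- the `p·q` elements `e(j,c)` form a basis of `H`
    LinearIndependent F
      (fun jc : Fin (p ^ n2) × Fin p => ee F p (p ^ n2) σ ρ (jc.1 : ℤ) (jc.2 : ℤ)) ∧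
    Submodule.span F
      (Set.range fun jc : Fin (p ^ n2) × Fin p => ee F p (p ^ n2) σ ρ (jc.1 : ℤ) (jc.2 : ℤ)) =
      (⊤ : Submodule F (Hsp F p (p ^ n2))) ∧
    -- `e(1,0) = m(0,1) + σ^(p-1)·m(p-1,1)`
    ee F p (p ^ n2) σ ρ 1 0 =
      mm F p (p ^ n2) 0 1 + σ ^ (p - 1) • mm F p (p ^ n2) ((p : ℤ) - 1) 1 ∧
    -- the `e(j,c)` are eigenvectors of `ad e(1,0)`
    (∀ j : ℤ, 0 ≤ j → j ≤ (p ^ n2 : ℤ) - 1 → ∀ c : ℤ,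
      br F p (p ^ n2) (ee F p (p ^ n2) σ ρ 1 0) (ee F p (p ^ n2) σ ρ j c) =
        alphaF F σ ρ j c • ee F p (p ^ n2) σ ρ j c) := by
  have hp3 : 3 ≤ p := by
    have h2 := hp.two_le
    rcases Nat.lt_or_ge p 3 with h | h
    · interval_cases p <;> simp_all
    · exact h
  have h1q : 1 < p ^ n2 :=
    lt_of_lt_of_le (by omega : 1 < p) (Nat.le_self_pow hn2.ne' p)
  have hspan := span_ee p (p ^ n2) hp hp3 h1q σ ρ hσ
  have hindep : LinearIndependent F
      (fun jc : Fin (p ^ n2) × Fin p => ee F p (p ^ n2) σ ρ (jc.1 : ℤ) (jc.2 : ℤ)) := by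
    refine linearIndependent_of_top_le_span_of_card_eq_finrank hspan.ge ?_
    rw [Module.finrank_pi]
    simp [Fintype.card_prod, mul_comm]
  refine ⟨hindep, hspan, ee_one_zero p (p ^ n2) hp3 σ ρ, ?_⟩
  intro j hj0 hjq c
  have hq' : ((p ^ n2 : ℕ) : ℤ) = ((p : ℤ)) ^ n2 := by push_cast; ring
  exact br_ee p (p ^ n2) hp hp3 h1q σ ρ hρ hj0 (by omega) c
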